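/- Let (X₁, Γ₁, Φ₁) and (X₂, Γ₂, Φ₂) be minimal equicontinuous Cantor actions which are return equivalent. Then for any basepoints x₁ ∈ X₁ and x₂ ∈ X₂, the relative Steinitz orders Π[G(Φ₁) : D(Φ₁,x₁)] and Π[G(Φ₂) : D(Φ₂,x₂)] are asymptotically equivalent Steinitz numbers. -/

import Mathlib

noncomputable section

open Set Topology

/-! ### The group of homeomorphisms -/

namespace Homeomorph

variable {X : Type*} [TopologicalSpace X]

instance instGroup' : Group (X ≃ₜ X) where
  mul f g := g.trans f
  one := Homeomorph.refl X
  inv := Homeomorph.symm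
  mul_assoc f g h := rfl
  one_mul f := rfl
  mul_one f := rfl
  inv_mul_cancel f := Homeomorph.ext fun x => f.symm_apply_apply x

@[simp] theorem mul_apply' (f g : X ≃ₜ X) (x : X) : (f * g) x = f (g x) := rfl
@[simp] theorem one_apply' (x : X) : (1 : X ≃ₜ X) x = x := rfl
@[simp] theorem inv_eq_symm (f : X ≃ₜ X) : f⁻¹ = f.symm := rfl

/-- The uniform topology (topology of uniform convergence, equivalently for a compact
metric space the compact-open topology) on the group of homeomorphisms of a compact
metric space, as the metric topology of the sup-metric. -/
instance instMetricSpaceHomeomorph {Y : Type*} [MetricSpace Y] [CompactSpace Y] :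
    MetricSpace (Y ≃ₜ Y) :=
  MetricSpace.induced (fun h => (⟨h, h.continuous⟩ : C(Y, Y)))
    (fun f g hfg => Homeomorph.ext fun x => congrFun (congrArg ContinuousMap.toFun hfg) x)
    inferInstance

end Homeomorph

namespace Homeomorph

variable {Y : Type*} [MetricSpace Y] [CompactSpace Y]

theorem dist_eq_contMap (f g : Y ≃ₜ Y) :
    dist f g = dist (⟨f, f.continuous⟩ : C(Y, Y)) (⟨g, g.continuous⟩ : C(Y, Y)) := rfl

theorem dist_apply_le (f g : Y ≃ₜ Y) (x : Y) : dist (f x) (g x) ≤ dist f g :=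
  ContinuousMap.dist_apply_le_dist (f := (⟨f, f.continuous⟩ : C(Y, Y)))
    (g := (⟨g, g.continuous⟩ : C(Y, Y))) x

theorem dist_lt_iff' (f g : Y ≃ₜ Y) {C : ℝ} (hC : 0 < C) :
    dist f g < C ↔ ∀ x : Y, dist (f x) (g x) < C := by
  rw [dist_eq_contMap, ContinuousMap.dist_lt_iff hC]
  rfl

instance : IsTopologicalGroup (Y ≃ₜ Y) where
  continuous_mul := by
    rw [Metric.continuous_iff]
    rintro ⟨f₀, g₀⟩ ε hε
    obtain ⟨δ₁, hδ₁, H₁⟩ := Metric.uniformContinuous_iff.mp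
      (CompactSpace.uniformContinuous_of_continuous f₀.continuous) (ε / 2) (by positivity)
    refine ⟨min δ₁ (ε / 2), by positivity, ?_⟩
    rintro ⟨f, g⟩ hd
    have hdf : dist f f₀ < ε / 2 := by
      have h' : dist f f₀ ≤ dist ((f, g)) ((f₀, g₀)) := by
        rw [Prod.dist_eq]; exact le_max_left _ _
      exact (h'.trans_lt hd).trans_le (min_le_right _ _)
    have hdg : dist g g₀ < δ₁ := by
      have h' : dist g g₀ ≤ dist ((f, g)) ((f₀, g₀)) := by
        rw [Prod.dist_eq]; exact le_max_right _ _
      exact (h'.trans_lt hd).trans_le (min_le_left _ _)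
    rw [dist_lt_iff' _ _ hε]
    intro x
    have h1 : dist (f (g x)) (f₀ (g x)) < ε / 2 :=
      lt_of_le_of_lt (dist_apply_le f f₀ (g x)) hdf
    have h2 : dist (f₀ (g x)) (f₀ (g₀ x)) < ε / 2 :=
      H₁ (lt_of_le_of_lt (dist_apply_le g g₀ x) hdg)
    calc dist ((f * g) x) ((f₀ * g₀) x) ≤ dist (f (g x)) (f₀ (g x)) + dist (f₀ (g x)) (f₀ (g₀ x)) :=
          dist_triangle _ _ _
      _ < ε / 2 + ε / 2 := by exact add_lt_add h1 h2
      _ = ε := by ring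
  continuous_inv := by
    rw [Metric.continuous_iff]
    intro f₀ ε hε
    obtain ⟨δ, hδ, H⟩ := Metric.uniformContinuous_iff.mp
      (CompactSpace.uniformContinuous_of_continuous f₀.symm.continuous) ε hε
    refine ⟨δ, hδ, ?_⟩
    intro g hdg
    rw [dist_lt_iff' _ _ hε]
    intro y
    have key : dist (g (g.symm y)) (f₀ (g.symm y)) < δ :=
      lt_of_le_of_lt (dist_apply_le g f₀ (g.symm y)) hdg
    have h2 := H key
    have h3 : dist (f₀.symm (g (g.symm y))) (f₀.symm (f₀ (g.symm y))) < ε := h2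
    rw [Homeomorph.apply_symm_apply, Homeomorph.symm_apply_apply] at h3
    rw [dist_comm] at h3
    simpa using h3
end Homeomorph

/-! ### Steinitz (supernatural) numbers -/

/-- A Steinitz number: a formal product of primes with exponents in `ℕ∞`. -/
def SteinitzNum : Type := Nat.Primes → ℕ∞

namespace SteinitzNum

/-- The Steinitz number associated to a natural number. -/
def ofNat (n : ℕ) : SteinitzNum := fun p => (n.factorization (p : ℕ) : ℕ∞)

/-- Multiplication of Steinitz numbers adds the exponents at each prime. -/
instance : Mul SteinitzNum := ⟨fun a b p => a p + b p⟩

/-- The least common multiple of a collection of positive integers, as a Steinitz number: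
its exponent at `p` is the supremum of the `p`-adic valuations of the elements. -/
def lcmSet (S : Set ℕ) : SteinitzNum := fun p => ⨆ n ∈ S, (n.factorization (p : ℕ) : ℕ∞)

/-- Two Steinitz numbers are asymptotically equivalent if they agree after multiplication
by positive integers. -/
def AsympEquiv (a b : SteinitzNum) : Prop :=
  ∃ n₀ m₀ : ℕ, 0 < n₀ ∧ 0 < m₀ ∧ ofNat n₀ * a = ofNat m₀ * b

/-- The prime spectrum of a Steinitz number: primes with nonzero exponent. -/
def primeSpectrum (a : SteinitzNum) : Set Nat.Primes := { p | a p ≠ 0 }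

/-- The finite prime spectrum: primes with finite nonzero exponent. -/
def finitePrimeSpectrum (a : SteinitzNum) : Set Nat.Primes := { p | a p ≠ 0 ∧ a p ≠ ⊤ }

/-- The infinite prime spectrum: primes with infinite exponent. -/
def infinitePrimeSpectrum (a : SteinitzNum) : Set Nat.Primes := { p | a p = ⊤ }

end SteinitzNum

/-! ### Steinitz orders for topological groups -/

/-- The Steinitz order of a topological group: the LCM of the orders of the finite
quotients `G/N` over open normal subgroups `N ⊆ G`. -/
def steinitzOrder (G : Type*) [Group G] [TopologicalSpace G] : SteinitzNum :=
  SteinitzNum.lcmSet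
    { n | ∃ N : Subgroup G, N.Normal ∧ IsOpen (N : Set G) ∧ n = Nat.card (G ⧸ N) }

/-- The Steinitz order of a subgroup `D` of a topological group `G`: the LCM of the
cardinalities `|D/(N ∩ D)|` over open normal subgroups `N ⊆ G`. -/
def steinitzOrderOfSubgroup {G : Type*} [Group G] [TopologicalSpace G] (D : Subgroup G) :
    SteinitzNum :=
  SteinitzNum.lcmSet
    { n | ∃ N : Subgroup G, N.Normal ∧ IsOpen (N : Set G) ∧
        n = Nat.card (↥D ⧸ (N.subgroupOf D)) }

/-- The relative Steinitz order of a subgroup `D` of a topological group `G`: the LCM of the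
cardinalities `|G/(N · D)|` over open normal subgroups `N ⊆ G`. -/
def steinitzRelativeOrder {G : Type*} [Group G] [TopologicalSpace G] (D : Subgroup G) :
    SteinitzNum :=
  SteinitzNum.lcmSet
    { n | ∃ N : Subgroup G, N.Normal ∧ IsOpen (N : Set G) ∧ n = Nat.card (G ⧸ (N ⊔ D)) }

/-- A profinite (compact Hausdorff totally disconnected) topological group is topologically
Noetherian if every increasing chain of closed subgroups has a maximal element. -/
def TopologicallyNoetherian (G : Type*) [Group G] [TopologicalSpace G] : Prop :=
  ∀ c : ℕ → Subgroup G, (∀ i, IsClosed (c i : Set G)) → Monotone c → ∃ i₀, ∀ i, c i ≤ c i₀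

/-! ### Cantor actions -/

section CantorActions

variable {X : Type*} [MetricSpace X] {Γ : Type*} [Group Γ]

/-- An action is minimal if every orbit is dense. -/
def IsMinimalAction (Φ : Γ →* (X ≃ₜ X)) : Prop :=
  ∀ x : X, Dense (Set.range fun g : Γ => Φ g x)

/-- An action is equicontinuous if it satisfies the uniform `ε`-`δ` condition with respect
to the metric. -/
def IsEquicontinuousAction (Φ : Γ →* (X ≃ₜ X)) : Prop :=
  ∀ ε : ℝ, 0 < ε → ∃ δ : ℝ, 0 < δ ∧
    ∀ x y : X, dist x y < δ → ∀ g : Γ, dist (Φ g x) (Φ g y) < ε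

variable [CompactSpace X]

/-- `G(Φ)`: the closure of the image of `Γ` in `Homeo(X)`, in the uniform topology. -/
def profiniteClosure (Φ : Γ →* (X ≃ₜ X)) : Subgroup (X ≃ₜ X) :=
  Φ.range.topologicalClosure

/-- The discriminant group: the isotropy subgroup of `G(Φ)` at `x`. -/
def discriminant (Φ : Γ →* (X ≃ₜ X)) (x : X) : Subgroup (profiniteClosure Φ) where
  carrier := { h | (h : X ≃ₜ X) x = x }
  one_mem' := rfl
  mul_mem' := by
    intro a b ha hb
    simp only [Set.mem_setOf_eq] at *
    show ((a : X ≃ₜ X) * (b : X ≃ₜ X)) x = x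
    rw [Homeomorph.mul_apply', hb, ha]
  inv_mem' := by
    intro a ha
    simp only [Set.mem_setOf_eq] at *
    show ((a : X ≃ₜ X)⁻¹) x = x
    rw [Homeomorph.inv_eq_symm]
    conv_lhs => rw [← ha]
    exact Homeomorph.symm_apply_apply _ _

/-- The Steinitz order `Π[G(Φ)]` of a Cantor action. -/
def steinitzOrderAction (Φ : Γ →* (X ≃ₜ X)) : SteinitzNum :=
  steinitzOrder ↥(profiniteClosure Φ)

/-- The Steinitz order `Π[D(Φ,x)]` of the discriminant of a Cantor action. -/
def steinitzOrderDisc (Φ : Γ →* (X ≃ₜ X)) (x : X) : SteinitzNum :=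
  steinitzOrderOfSubgroup (discriminant Φ x)

/-- The relative Steinitz order `Π[G(Φ) : D(Φ,x)]` of a Cantor action. -/
def steinitzOrderRel (Φ : Γ →* (X ≃ₜ X)) (x : X) : SteinitzNum :=
  steinitzRelativeOrder (discriminant Φ x)

end CantorActions

/-! ### Adapted sets, holonomy and return equivalence -/

section Adapted

variable {X : Type*} [MetricSpace X] {Γ : Type*} [Group Γ]

/-- A nonempty clopen subset `U ⊆ X` is adapted to the action `Φ` if every group element
either fixes `U` or moves it entirely off of itself. -/
def IsAdaptedSet (Φ : Γ →* (X ≃ₜ X)) (U : Set X) : Prop :=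
  U.Nonempty ∧ IsClopen U ∧ ∀ g : Γ, ((Φ g) '' U ∩ U).Nonempty → (Φ g) '' U = U

/-- The stabilizer subgroup `Γ_U` of an adapted set. -/
def adaptedStabilizer (Φ : Γ →* (X ≃ₜ X)) (U : Set X) : Subgroup Γ where
  carrier := { g | (Φ g) '' U = U }
  one_mem' := by show (Φ 1) '' U = U; rw [map_one]; exact Set.image_id U
  mul_mem' := by
    intro a b ha hb
    simp only [Set.mem_setOf_eq] at *
    rw [map_mul]
    show ((Φ a) * (Φ b)) '' U = U
    have : (((Φ a) * (Φ b) : X ≃ₜ X) : X → X) = (Φ a) ∘ (Φ b) := rfl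
    rw [this, Set.image_comp, hb, ha]
  inv_mem' := by
    intro a ha
    simp only [Set.mem_setOf_eq] at *
    rw [map_inv, Homeomorph.inv_eq_symm]
    conv_lhs => rw [← ha]
    rw [← Set.image_comp]
    simp

/-- The homeomorphism of an invariant set induced by a homeomorphism of `X`. -/
def restrictHomeo (h : X ≃ₜ X) {U : Set X} (hU : h '' U = U) : U ≃ₜ U :=
  (h.image U).trans (Homeomorph.setCongr hU)

@[simp] theorem restrictHomeo_coe (h : X ≃ₜ X) {U : Set X} (hU : h '' U = U) (x : U) :
    (restrictHomeo h hU x : X) = h x := rfl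

/-- The holonomy homomorphism of an adapted set: restriction of the stabilizer to `U`. -/
def holonomyHom (Φ : Γ →* (X ≃ₜ X)) (U : Set X) :
    adaptedStabilizer Φ U →* (↥U ≃ₜ ↥U) where
  toFun g := restrictHomeo (Φ (g : Γ)) g.2
  map_one' := by
    ext x
    show ((restrictHomeo (Φ ((1 : adaptedStabilizer Φ U) : Γ)) _ x : X) = _)
    simp
  map_mul' := by
    intro a b
    ext x
    show ((restrictHomeo (Φ ((a * b : adaptedStabilizer Φ U) : Γ)) _ x : X) = _)
    simp only [restrictHomeo_coe, Subgroup.coe_mul, map_mul]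
    rfl

/-- The holonomy group `H_U` of an adapted set: the image of the stabilizer in `Homeo(U)`. -/
def holonomyGroup (Φ : Γ →* (X ≃ₜ X)) (U : Set X) : Subgroup (↥U ≃ₜ ↥U) :=
  (holonomyHom Φ U).range

end Adapted

/-- Two Cantor actions are return equivalent if they admit adapted sets whose holonomy
actions are isomorphic, via a homeomorphism between the adapted sets together with a
compatible isomorphism of the holonomy groups. -/
def ReturnEquivalent
    {X₁ : Type*} [MetricSpace X₁] {Γ₁ : Type*} [Group Γ₁]
    {X₂ : Type*} [MetricSpace X₂] {Γ₂ : Type*} [Group Γ₂]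
    (Φ₁ : Γ₁ →* (X₁ ≃ₜ X₁)) (Φ₂ : Γ₂ →* (X₂ ≃ₜ X₂)) : Prop :=
  ∃ (U₁ : Set X₁) (U₂ : Set X₂), IsAdaptedSet Φ₁ U₁ ∧ IsAdaptedSet Φ₂ U₂ ∧
    ∃ (h : ↥U₁ ≃ₜ ↥U₂) (θ : holonomyGroup Φ₁ U₁ ≃* holonomyGroup Φ₂ U₂),
      ∀ k : holonomyGroup Φ₁ U₁,
        ((θ k : ↥U₂ ≃ₜ ↥U₂)) = h.symm.trans (((k : ↥U₁ ≃ₜ ↥U₁)).trans h)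

section Regularity

variable {X : Type*} [MetricSpace X]

/-- An action of a group `H` on `X` through a homomorphism `ρ : H →* Homeo(X)` is locally
quasi-analytic if there is `ε > 0` so that for every nonempty open `U` of diameter less
than `ε`, any element acting as the identity on a nonempty open subset `V ⊆ U` with
`ρ g (V) = V` acts as the identity on all of `U`. -/
def IsLocallyQuasiAnalytic {H : Type*} [Group H] (ρ : H →* (X ≃ₜ X)) : Prop :=
  ∃ ε : ℝ, 0 < ε ∧ ∀ U : Set X, IsOpen U → U.Nonempty → Metric.diam U < ε →
    ∀ V : Set X, V ⊆ U → IsOpen V → V.Nonempty →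
      ∀ g : H, (ρ g) '' V = V → (∀ x ∈ V, ρ g x = x) → ∀ x ∈ U, ρ g x = x

variable [CompactSpace X] {Γ : Type*} [Group Γ]

/-- A Cantor action is stable if the induced action of `G(Φ)` on `X` is locally
quasi-analytic; otherwise it is wild. -/
def IsStableAction (Φ : Γ →* (X ≃ₜ X)) : Prop :=
  IsLocallyQuasiAnalytic (profiniteClosure Φ).subtype

/-- An action is topologically free if the set of points fixed by some nontrivial group
element is meagre. -/
def IsTopologicallyFree (Φ : Γ →* (X ≃ₜ X)) : Prop :=
  IsMeagre { x : X | ∃ g : Γ, g ≠ 1 ∧ Φ g x = x }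

end Regularity


/-!
`G(Φ)` is compact: by Arzelà–Ascoli, and because `f ↦ (f, f⁻¹)` embeds `Homeo(X)` as a closed
subset of `C(X, X) × C(X, X)`. Hence open subgroups of `G(Φ)` have finite index, continuous
surjections out of it are quotient maps, and it acts transitively on `X`, its orbits being
closed and containing the dense `Γ`-orbits.

The relative Steinitz order of `D ≤ G` is unchanged when `D` is pulled back along a quotient
homomorphism, and is multiplied by `[G : G']` when `G` is replaced by an open subgroup `G' ⊇ D`.
Conjugation in `G(Φ)` therefore makes `Π[G(Φ) : D(Φ,x)]` independent of `x`. For an adapted set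
`U ∋ x`, the stabilizer of `U` in `G(Φ)` is an open subgroup containing `D(Φ,x)`; restriction
to `U` maps it onto the closure of the holonomy group `H_U`, and `D(Φ,x)` is the preimage of the
isotropy group of `x`. So up to asymptotic equivalence the invariant is the relative order of an
isotropy group in the closure of `H_U`, and a return equivalence conjugates these closures by a
homeomorphism `U₁ ≃ U₂`.
-/

namespace SteinitzNum

theorem ofNat_one_mul (a : SteinitzNum) : ofNat 1 * a = a := by
  funext p
  show ofNat 1 p + a p = a p
  simp [ofNat]

theorem ofNat_mul {m n : ℕ} (hm : m ≠ 0) (hn : n ≠ 0) : ofNat (m * n) = ofNat m * ofNat n := by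
  funext p
  show ((m * n).factorization p : ℕ∞) = m.factorization p + n.factorization p
  rw [Nat.factorization_mul hm hn, Finsupp.add_apply, Nat.cast_add]

protected theorem mul_comm (a b : SteinitzNum) : a * b = b * a :=
  funext fun _ => add_comm _ _

protected theorem mul_assoc (a b c : SteinitzNum) : a * b * c = a * (b * c) :=
  funext fun _ => add_assoc _ _ _

theorem AsympEquiv.symm {a b : SteinitzNum} (h : AsympEquiv a b) : AsympEquiv b a := by
  obtain ⟨n, m, hn, hm, h⟩ := h
  exact ⟨m, n, hm, hn, h.symm⟩

theorem AsympEquiv.trans {a b c : SteinitzNum} (hab : AsympEquiv a b) (hbc : AsympEquiv b c) :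
    AsympEquiv a c := by
  obtain ⟨n₀, m₀, hn₀, hm₀, hab⟩ := hab
  obtain ⟨n₁, m₁, hn₁, hm₁, hbc⟩ := hbc
  refine ⟨n₁ * n₀, m₀ * m₁, Nat.mul_pos hn₁ hn₀, Nat.mul_pos hm₀ hm₁, ?_⟩
  rw [ofNat_mul hn₁.ne' hn₀.ne', ofNat_mul hm₀.ne' hm₁.ne', SteinitzNum.mul_assoc, hab,
    ← SteinitzNum.mul_assoc, SteinitzNum.mul_comm (ofNat n₁), SteinitzNum.mul_assoc, hbc,
    ← SteinitzNum.mul_assoc]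

theorem asympEquiv_ofNat_mul {m : ℕ} (hm : m ≠ 0) (a : SteinitzNum) :
    AsympEquiv (ofNat m * a) a :=
  ⟨1, m, one_pos, Nat.pos_of_ne_zero hm, ofNat_one_mul _⟩

theorem lcmSet_eq_of_cofinal {S T : Set ℕ} (hTS : T ⊆ S)
    (hST : ∀ n ∈ S, ∃ k ∈ T, k ≠ 0 ∧ n ∣ k) : lcmSet S = lcmSet T := by
  funext p
  refine le_antisymm (iSup₂_le fun n hn => ?_) (biSup_mono hTS)
  obtain ⟨k, hk, hk0, hnk⟩ := hST n hn
  refine le_iSup₂_of_le k hk (Nat.cast_le.mpr ?_)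
  exact (Nat.factorization_le_iff_dvd (ne_zero_of_dvd_ne_zero hk0 hnk) hk0).mpr hnk p

theorem lcmSet_image_mul_left {m : ℕ} (hm : m ≠ 0) {T : Set ℕ} (hT : T.Nonempty) (hT0 : 0 ∉ T) :
    lcmSet ((m * ·) '' T) = ofNat m * lcmSet T := by
  funext p
  show ⨆ n ∈ (m * ·) '' T, (n.factorization p : ℕ∞) =
    m.factorization p + ⨆ k ∈ T, (k.factorization p : ℕ∞)
  rw [iSup_image, ENat.add_biSup hT]
  refine iSup_congr fun k => iSup_congr fun hk => ?_
  rw [Nat.factorization_mul hm (ne_of_mem_of_not_mem hk hT0), Finsupp.add_apply, Nat.cast_add]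

end SteinitzNum

section RelativeOrder

variable {G : Type*} [Group G] [TopologicalSpace G] [IsTopologicalGroup G]

theorem steinitzRelativeOrder_comap {Q : Type*} [Group Q] [TopologicalSpace Q]
    (ρ : G →* Q) (hρ : IsQuotientMap ρ) (D : Subgroup Q) :
    steinitzRelativeOrder (D.comap ρ) = steinitzRelativeOrder D := by
  have hcomap (M : Subgroup Q) : (M ⊔ D).comap ρ = M.comap ρ ⊔ D.comap ρ :=
    (Subgroup.comap_sup_eq ρ M D hρ.surjective).symm
  unfold steinitzRelativeOrder
  congr 1
  ext n
  constructor
  · rintro ⟨N, hN, hNo, rfl⟩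
    have hmap : (N.map ρ).comap ρ = N ⊔ ρ.ker := Subgroup.comap_map_eq ρ N
    refine ⟨N.map ρ, hN.map ρ hρ.surjective, ?_, ?_⟩
    · rw [← hρ.isOpen_preimage]
      exact Subgroup.isOpen_mono (le_sup_left.trans hmap.ge) hNo
    · show (N ⊔ D.comap ρ).index = (N.map ρ ⊔ D).index
      rw [← Subgroup.index_comap_of_surjective _ hρ.surjective, hcomap, hmap, sup_assoc,
        sup_eq_right.mpr (ρ.ker_le_comap D)]
  · rintro ⟨M, hM, hMo, rfl⟩
    refine ⟨M.comap ρ, hM.comap ρ, hMo.preimage hρ.continuous, ?_⟩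
    show (M ⊔ D).index = (M.comap ρ ⊔ D.comap ρ).index
    rw [← hcomap, Subgroup.index_comap_of_surjective _ hρ.surjective]

variable [CompactSpace G]

theorem Subgroup.index_ne_zero_of_isOpen {H : Subgroup G} (hH : IsOpen (H : Set G)) :
    H.index ≠ 0 :=
  have := H.quotient_finite_of_isOpen hH
  Subgroup.index_ne_zero_of_finite

theorem Subgroup.isOpen_normalCore {H : Subgroup G} (hH : IsOpen (H : Set G)) :
    IsOpen (H.normalCore : Set G) := by
  have := H.quotient_finite_of_isOpen hH
  have := H.finiteIndex_of_finite_quotient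
  have := H.finiteIndex_normalCore
  exact Subgroup.isOpen_of_isClosed_of_finiteIndex _
    (H.normalCore_isClosed (H.isClosed_of_isOpen hH))

theorem steinitzRelativeOrder_eq_lcmSet_of_le {G' : Subgroup G} (hG' : IsOpen (G' : Set G))
    (D : Subgroup G) : steinitzRelativeOrder D = SteinitzNum.lcmSet
      {k | ∃ N : Subgroup G, N.Normal ∧ IsOpen (N : Set G) ∧ N ≤ G' ∧ k = (N ⊔ D).index} := by
  refine SteinitzNum.lcmSet_eq_of_cofinal (fun _ ⟨N, hN, hNo, _, hk⟩ => ⟨N, hN, hNo, hk⟩) ?_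
  rintro _ ⟨N, -, hNo, rfl⟩
  have hN'le : (N ⊓ G').normalCore ≤ N ⊓ G' := Subgroup.normalCore_le _
  have hN'o := Subgroup.isOpen_normalCore (H := N ⊓ G') (hNo.inter hG')
  exact ⟨_, ⟨_, Subgroup.normalCore_normal _, hN'o, hN'le.trans inf_le_right, rfl⟩,
    Subgroup.index_ne_zero_of_isOpen (Subgroup.isOpen_mono le_sup_left hN'o),
    Subgroup.index_dvd_of_le (sup_le_sup_right (hN'le.trans inf_le_left) D)⟩

theorem Subgroup.index_sup_subgroupOf_ne_zero {G' N : Subgroup G} (hG' : IsOpen (G' : Set G))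
    (hN : IsOpen (N : Set G)) (D : Subgroup G) : ((N ⊔ D).subgroupOf G').index ≠ 0 :=
  have : CompactSpace G' := isCompact_iff_compactSpace.mp (G'.isClosed_of_isOpen hG').isCompact
  Subgroup.index_ne_zero_of_isOpen
    (Subgroup.subgroupOf_isOpen G' _ (Subgroup.isOpen_mono le_sup_left hN))

-- Every open normal subgroup of `G'` contains the normal core in `G` of its image.
theorem steinitzRelativeOrder_subgroupOf_eq_lcmSet {G' D : Subgroup G}
    (hG' : IsOpen (G' : Set G)) (hD : D ≤ G') :
    steinitzRelativeOrder (D.subgroupOf G') = SteinitzNum.lcmSet {k | ∃ N : Subgroup G,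
      N.Normal ∧ IsOpen (N : Set G) ∧ N ≤ G' ∧ k = ((N ⊔ D).subgroupOf G').index} := by
  refine SteinitzNum.lcmSet_eq_of_cofinal ?_ ?_
  · rintro _ ⟨N, hN, hNo, hNG', rfl⟩
    refine ⟨N.subgroupOf G', hN.comap _, Subgroup.subgroupOf_isOpen G' N hNo, ?_⟩
    rw [Subgroup.subgroupOf_sup hNG' hD]
    rfl
  · rintro _ ⟨M, -, hMo, rfl⟩
    set N := (M.map G'.subtype).normalCore
    have hNM : N.subgroupOf G' ≤ M := by
      conv_rhs => rw [← Subgroup.comap_map_eq_self_of_injective G'.subtype_injective M]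
      exact Subgroup.comap_mono (Subgroup.normalCore_le _)
    have hNG' : N ≤ G' := (Subgroup.normalCore_le _).trans (Subgroup.map_subtype_le M)
    have hNo : IsOpen (N : Set G) :=
      Subgroup.isOpen_normalCore (hG'.isOpenMap_subtype_val _ hMo)
    refine ⟨_, ⟨N, Subgroup.normalCore_normal _, hNo, hNG', rfl⟩,
      Subgroup.index_sup_subgroupOf_ne_zero hG' hNo D, ?_⟩
    rw [Subgroup.subgroupOf_sup hNG' hD]
    exact Subgroup.index_dvd_of_le (sup_le_sup_right hNM _)

theorem steinitzRelativeOrder_eq_index_mul_subgroupOf {G' D : Subgroup G}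
    (hG' : IsOpen (G' : Set G)) (hD : D ≤ G') :
    steinitzRelativeOrder D =
      SteinitzNum.ofNat G'.index * steinitzRelativeOrder (D.subgroupOf G') := by
  have hidx {N : Subgroup G} (hN : N ≤ G') :
      G'.index * ((N ⊔ D).subgroupOf G').index = (N ⊔ D).index := by
    rw [Nat.mul_comm, ← Subgroup.relIndex_mul_index (sup_le hN hD)]
    rfl
  set T : Set ℕ := {k | ∃ N : Subgroup G, N.Normal ∧ IsOpen (N : Set G) ∧ N ≤ G' ∧
    k = ((N ⊔ D).subgroupOf G').index}
  have hT : T.Nonempty :=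
    ⟨_, G'.normalCore, G'.normalCore_normal, Subgroup.isOpen_normalCore hG', G'.normalCore_le, rfl⟩
  have hT0 : 0 ∉ T := fun ⟨_, _, hNo, _, h⟩ =>
    Subgroup.index_sup_subgroupOf_ne_zero hG' hNo D h.symm
  rw [steinitzRelativeOrder_subgroupOf_eq_lcmSet hG' hD,
    ← SteinitzNum.lcmSet_image_mul_left (Subgroup.index_ne_zero_of_isOpen hG') hT hT0,
    steinitzRelativeOrder_eq_lcmSet_of_le hG' D]
  congr 1
  ext k
  constructor
  · rintro ⟨N, hN, hNo, hNG', rfl⟩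
    exact ⟨_, ⟨N, hN, hNo, hNG', rfl⟩, hidx hNG'⟩
  · rintro ⟨_, ⟨N, hN, hNo, hNG', rfl⟩, rfl⟩
    exact ⟨N, hN, hNo, hNG', hidx hNG'⟩

end RelativeOrder


theorem ContinuousMap.isCompact_closure_range_of_equicontinuous {ι X Y : Type*}
    [TopologicalSpace X] [CompactSpace X] [MetricSpace Y] [CompactSpace Y] {F : ι → C(X, Y)}
    (hF : Equicontinuous fun i => ⇑(F i)) : IsCompact (closure (range F)) := by
  let e := (ContinuousMap.isometryEquivBoundedOfCompact X Y).toHomeomorph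
  have hA : Equicontinuous fun f : range (e ∘ F) => ⇑(f : BoundedContinuousFunction X Y) := by
    have : (range fun f : range (e ∘ F) => ⇑(f : BoundedContinuousFunction X Y)) =
        range fun i => ⇑(F i) := by
      ext; simp [e]; rfl
    rw [equicontinuous_iff_range] at hF ⊢
    rwa [this]
  have hcl : closure (range F) = e ⁻¹' closure (range (e ∘ F)) := by
    rw [Homeomorph.preimage_closure, range_comp, e.injective.preimage_image]
  rw [hcl, e.isCompact_preimage]
  exact BoundedContinuousFunction.arzela_ascoli univ isCompact_univ _ (fun _ _ _ => mem_univ _) hA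

namespace Homeomorph

instance applyMulAction {Y : Type*} [TopologicalSpace Y] : MulAction (Y ≃ₜ Y) Y where
  smul f y := f y
  one_smul _ := rfl
  mul_smul _ _ _ := rfl

variable {Y : Type*} [MetricSpace Y] [CompactSpace Y]

theorem isometry_toContinuousMap : Isometry fun f : Y ≃ₜ Y => (f : C(Y, Y)) :=
  Isometry.of_dist_eq fun _ _ => rfl

theorem continuous_apply_const (y : Y) : Continuous fun f : Y ≃ₜ Y => f y :=
  (continuous_eval_const (F := C(Y, Y)) y).comp isometry_toContinuousMap.continuous

theorem isClosedEmbedding_toContinuousMap_prod_symm :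
    IsClosedEmbedding fun f : Y ≃ₜ Y => ((f : C(Y, Y)), (f.symm : C(Y, Y))) := by
  have hc := isometry_toContinuousMap (Y := Y)
  refine ⟨⟨IsInducing.of_comp (hc.continuous.prodMk (hc.continuous.comp continuous_inv))
    continuous_fst hc.isEmbedding.isInducing,
    fun f g hfg => hc.injective (congrArg Prod.fst hfg)⟩, ?_⟩
  have hrange : range (fun f : Y ≃ₜ Y => ((f : C(Y, Y)), (f.symm : C(Y, Y)))) =
      {p | p.1.comp p.2 = .id Y} ∩ {p | p.2.comp p.1 = .id Y} := by
    ext ⟨F, H⟩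
    refine ⟨?_, fun ⟨hFH, hHF⟩ => ?_⟩
    · rintro ⟨f, hf⟩
      cases hf
      exact ⟨ContinuousMap.ext f.apply_symm_apply, ContinuousMap.ext f.symm_apply_apply⟩
    · exact ⟨⟨⟨F, H, fun y => congrArg (· y) hHF, fun y => congrArg (· y) hFH⟩, F.continuous,
        H.continuous⟩, rfl⟩
  rw [hrange]
  exact (isClosed_eq (ContinuousMap.continuous_comp'.comp continuous_swap) continuous_const).inter
    (isClosed_eq ContinuousMap.continuous_comp' continuous_const)

end Homeomorph

section CantorAction

variable {X : Type*} [MetricSpace X] [CompactSpace X] {Γ : Type*} [Group Γ] {Φ : Γ →* (X ≃ₜ X)}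

theorem apply_mem_profiniteClosure (Φ : Γ →* (X ≃ₜ X)) (g : Γ) : Φ g ∈ profiniteClosure Φ :=
  Subgroup.le_topologicalClosure _ ⟨g, rfl⟩

theorem mem_profiniteClosure_iff {f : X ≃ₜ X} :
    f ∈ profiniteClosure Φ ↔ ∀ ε > 0, ∃ g, dist f (Φ g) < ε := by
  simp only [profiniteClosure, ← SetLike.mem_coe, Subgroup.topologicalClosure_coe,
    Metric.mem_closure_iff, MonoidHom.coe_range, exists_range_iff]

theorem IsEquicontinuousAction.isCompact_profiniteClosure (heqc : IsEquicontinuousAction Φ) :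
    IsCompact (profiniteClosure Φ : Set (X ≃ₜ X)) := by
  set K := closure (range fun g => (Φ g : C(X, X)))
  have hK : IsCompact K := ContinuousMap.isCompact_closure_range_of_equicontinuous
    (Metric.uniformEquicontinuous_iff.mpr heqc).equicontinuous
  have hmem {f : X ≃ₜ X} (hf : f ∈ profiniteClosure Φ) : (f : C(X, X)) ∈ K :=
    map_mem_closure Homeomorph.isometry_toContinuousMap.continuous hf
      (by rintro _ ⟨g, rfl⟩; exact ⟨g, rfl⟩)
  exact (Homeomorph.isClosedEmbedding_toContinuousMap_prod_symm.isCompact_preimage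
    (hK.prod hK)).of_isClosed_subset (Subgroup.isClosed_topologicalClosure _)
    fun f hf => ⟨hmem hf, hmem (inv_mem hf)⟩

theorem IsEquicontinuousAction.compactSpace_profiniteClosure (heqc : IsEquicontinuousAction Φ) :
    CompactSpace (profiniteClosure Φ) :=
  isCompact_iff_compactSpace.mp heqc.isCompact_profiniteClosure

-- The orbit map of `x` on `G(Φ)` has compact, hence closed, image containing the dense orbit.
theorem IsMinimalAction.exists_mem_profiniteClosure_apply_eq (hmin : IsMinimalAction Φ)
    (heqc : IsEquicontinuousAction Φ) (x y : X) : ∃ f ∈ profiniteClosure Φ, f x = y := by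
  have hclosed : IsClosed ((fun f : X ≃ₜ X => f x) '' profiniteClosure Φ) :=
    (heqc.isCompact_profiniteClosure.image (Homeomorph.continuous_apply_const x)).isClosed
  have horbit : range (fun g => Φ g x) ⊆ (fun f : X ≃ₜ X => f x) '' profiniteClosure Φ := by
    rintro _ ⟨g, rfl⟩
    exact ⟨Φ g, apply_mem_profiniteClosure Φ g, rfl⟩
  have := closure_minimal horbit hclosed
  rw [(hmin x).closure_eq] at this
  exact this (mem_univ y)

theorem steinitzOrderRel_eq_of_isMinimalAction (hmin : IsMinimalAction Φ)
    (heqc : IsEquicontinuousAction Φ) (x y : X) : steinitzOrderRel Φ x = steinitzOrderRel Φ y := by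
  have := heqc.compactSpace_profiniteClosure
  obtain ⟨f, hf, rfl⟩ := hmin.exists_mem_profiniteClosure_apply_eq heqc x y
  set c := (MulAut.conj (⟨f, hf⟩ : profiniteClosure Φ)).toMonoidHom
  have hc : Continuous c := (continuous_mul_const _).comp (continuous_const_mul _)
  have hD : discriminant Φ x = (discriminant Φ (f x)).comap c := by
    ext b
    show (b : X ≃ₜ X) x = x ↔ (f * b * f⁻¹) (f x) = f x
    simp
  rw [steinitzOrderRel, steinitzOrderRel, hD,
    steinitzRelativeOrder_comap c (hc.isClosedMap.isQuotientMap hc (MulAut.conj _).surjective)]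

end CantorAction

theorem IsCompact.exists_pos_forall_dist_lt_mem_iff {X : Type*} [PseudoMetricSpace X] {U : Set X}
    (hc : IsCompact U) (ho : IsOpen U) : ∃ δ > 0, ∀ a b, dist a b < δ → (a ∈ U ↔ b ∈ U) := by
  obtain ⟨δ, hδ, hsub⟩ := hc.exists_thickening_subset_open ho subset_rfl
  refine ⟨δ, hδ, fun a b hab => ⟨fun ha => hsub ?_, fun hb => hsub ?_⟩⟩
  · exact Metric.mem_thickening_iff.mpr ⟨a, ha, by rwa [dist_comm]⟩
  · exact Metric.mem_thickening_iff.mpr ⟨b, hb, hab⟩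

section Restriction

variable {X : Type*} [MetricSpace X] [CompactSpace X]

theorem Homeomorph.image_eq_self_iff_of_dist_lt {U : Set X} {δ : ℝ}
    (hδ : ∀ a b, dist a b < δ → (a ∈ U ↔ b ∈ U)) {f g : X ≃ₜ X} (hfg : dist f g < δ) :
    f '' U = U ↔ g '' U = U := by
  have hpre : f ⁻¹' U = g ⁻¹' U := Set.ext fun a => hδ _ _ ((dist_apply_le f g a).trans_lt hfg)
  rw [eq_comm, ← preimage_eq_iff_eq_image f.bijective, hpre, preimage_eq_iff_eq_image g.bijective,
    eq_comm]

theorem isOpen_adaptedStabilizer_subtype (H : Subgroup (X ≃ₜ X)) {U : Set X} (hU : IsClopen U) :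
    IsOpen (adaptedStabilizer H.subtype U : Set H) := by
  obtain ⟨δ, hδ, hgap⟩ := hU.isClosed.isCompact.exists_pos_forall_dist_lt_mem_iff hU.isOpen
  have : IsOpen {f : X ≃ₜ X | f '' U = U} := Metric.isOpen_iff.mpr fun g hg =>
    ⟨δ, hδ, fun f hf => (Homeomorph.image_eq_self_iff_of_dist_lt hgap hf).mpr hg⟩
  exact this.preimage continuous_subtype_val

theorem dist_restrictHomeo_le {U : Set X} [CompactSpace U] {f g : X ≃ₜ X} (hf : f '' U = U)
    (hg : g '' U = U) : dist (restrictHomeo f hf) (restrictHomeo g hg) ≤ dist f g :=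
  (ContinuousMap.dist_le dist_nonneg).mpr fun y => Homeomorph.dist_apply_le f g y

theorem continuous_holonomyHom_subtype (H : Subgroup (X ≃ₜ X)) (U : Set X) [CompactSpace U] :
    Continuous (holonomyHom H.subtype U) :=
  (LipschitzWith.of_dist_le_mul fun a b => by
    rw [NNReal.coe_one, one_mul]
    exact dist_restrictHomeo_le (f := ((a : H) : X ≃ₜ X)) (g := ((b : H) : X ≃ₜ X)) a.2 b.2
    ).continuous

end Restriction

section Holonomy

variable {X : Type*} [MetricSpace X] [CompactSpace X] {Γ : Type*} [Group Γ] {Φ : Γ →* (X ≃ₜ X)}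
  {U : Set X}

theorem IsAdaptedSet.image_eq_of_mem_profiniteClosure (hU : IsAdaptedSet Φ U) {f : X ≃ₜ X}
    (hf : f ∈ profiniteClosure Φ) {u : X} (hu : u ∈ U) (hfu : f u ∈ U) : f '' U = U := by
  obtain ⟨δ, hδ, hgap⟩ := hU.2.1.isClosed.isCompact.exists_pos_forall_dist_lt_mem_iff hU.2.1.isOpen
  obtain ⟨g, hg⟩ := mem_profiniteClosure_iff.mp hf δ hδ
  have hgu : Φ g u ∈ U := (hgap _ _ ((Homeomorph.dist_apply_le f (Φ g) u).trans_lt hg)).mp hfu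
  exact (Homeomorph.image_eq_self_iff_of_dist_lt hgap hg).mpr
    (hU.2.2 g ⟨_, mem_image_of_mem _ hu, hgu⟩)

theorem IsAdaptedSet.discriminant_le_adaptedStabilizer (hU : IsAdaptedSet Φ U) {x : X}
    (hx : x ∈ U) : discriminant Φ x ≤ adaptedStabilizer (profiniteClosure Φ).subtype U :=
  fun a (ha : (a : X ≃ₜ X) x = x) =>
    hU.image_eq_of_mem_profiniteClosure (f := a) a.2 hx (by rwa [ha])

theorem IsEquicontinuousAction.compactSpace_adaptedStabilizer (heqc : IsEquicontinuousAction Φ)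
    (hU : IsClopen U) : CompactSpace (adaptedStabilizer (profiniteClosure Φ).subtype U) :=
  have := heqc.compactSpace_profiniteClosure
  isCompact_iff_compactSpace.mp (Subgroup.isClosed_of_isOpen _
    (isOpen_adaptedStabilizer_subtype (profiniteClosure Φ) hU)).isCompact

theorem IsAdaptedSet.range_holonomyHom_profiniteClosure (heqc : IsEquicontinuousAction Φ)
    (hU : IsAdaptedSet Φ U) [CompactSpace U] :
    (holonomyHom (profiniteClosure Φ).subtype U).range =
      (holonomyGroup Φ U).topologicalClosure := by
  have := heqc.compactSpace_adaptedStabilizer hU.2.1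
  obtain ⟨δ, hδ, hgap⟩ := hU.2.1.isClosed.isCompact.exists_pos_forall_dist_lt_mem_iff hU.2.1.isOpen
  apply SetLike.coe_injective
  refine subset_antisymm ?_ (closure_minimal ?_
    (isCompact_range (continuous_holonomyHom_subtype _ U)).isClosed)
  · rintro _ ⟨a, rfl⟩
    refine Metric.mem_closure_iff.mpr fun ε hε => ?_
    obtain ⟨g, hg⟩ := mem_profiniteClosure_iff.mp (a : profiniteClosure Φ).2 _ (lt_min hε hδ)
    have hgU : Φ g '' U = U :=
      (Homeomorph.image_eq_self_iff_of_dist_lt hgap (hg.trans_le (min_le_right _ _))).mp a.2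
    exact ⟨_, ⟨⟨g, hgU⟩, rfl⟩,
      (dist_restrictHomeo_le a.2 hgU).trans_lt (hg.trans_le (min_le_left _ _))⟩
  · rintro _ ⟨g, rfl⟩
    exact ⟨⟨⟨Φ g, apply_mem_profiniteClosure Φ g⟩, g.2⟩, rfl⟩

theorem IsAdaptedSet.isCompact_closure_holonomyGroup (heqc : IsEquicontinuousAction Φ)
    (hU : IsAdaptedSet Φ U) [CompactSpace U] :
    IsCompact ((holonomyGroup Φ U).topologicalClosure : Set (U ≃ₜ U)) := by
  have := heqc.compactSpace_adaptedStabilizer hU.2.1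
  rw [← hU.range_holonomyHom_profiniteClosure heqc, MonoidHom.coe_range]
  exact isCompact_range (continuous_holonomyHom_subtype _ U)

theorem steinitzOrderRel_asympEquiv_holonomy (heqc : IsEquicontinuousAction Φ)
    (hU : IsAdaptedSet Φ U) [CompactSpace U] {x : X} (hx : x ∈ U) :
    SteinitzNum.AsympEquiv (steinitzOrderRel Φ x) (steinitzRelativeOrder
      (MulAction.stabilizer (holonomyGroup Φ U).topologicalClosure (⟨x, hx⟩ : U))) := by
  have := heqc.compactSpace_profiniteClosure
  set G' := adaptedStabilizer (profiniteClosure Φ).subtype U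
  have hopen : IsOpen (G' : Set (profiniteClosure Φ)) :=
    isOpen_adaptedStabilizer_subtype (profiniteClosure Φ) hU.2.1
  have := heqc.compactSpace_adaptedStabilizer hU.2.1
  have hrange := hU.range_holonomyHom_profiniteClosure heqc
  let ρ : G' →* (holonomyGroup Φ U).topologicalClosure :=
    (holonomyHom _ U).codRestrict _ fun a => hrange ▸ ⟨a, rfl⟩
  have hρc : Continuous ρ := (continuous_holonomyHom_subtype _ U).subtype_mk _
  have hρs : Function.Surjective ρ := by
    rintro ⟨q, hq⟩
    rw [← hrange] at hq
    obtain ⟨a, rfl⟩ := hq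
    exact ⟨a, rfl⟩
  have hD : (discriminant Φ x).subgroupOf G' =
      (MulAction.stabilizer _ (⟨x, hx⟩ : U)).comap ρ := by
    ext a
    show ((a : profiniteClosure Φ) : X ≃ₜ X) x = x ↔ ρ a • (⟨x, hx⟩ : U) = ⟨x, hx⟩
    exact (Subtype.ext_iff (a1 := ρ a • (⟨x, hx⟩ : U)) (a2 := ⟨x, hx⟩)).symm
  rw [steinitzOrderRel, steinitzRelativeOrder_eq_index_mul_subgroupOf hopen
    (hU.discriminant_le_adaptedStabilizer hx), hD,
    steinitzRelativeOrder_comap ρ (hρc.isClosedMap.isQuotientMap hρc hρs)]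
  exact SteinitzNum.asympEquiv_ofNat_mul (Subgroup.index_ne_zero_of_isOpen hopen) _

end Holonomy

namespace Homeomorph

variable {Y₁ Y₂ : Type*}

section

variable [TopologicalSpace Y₁] [TopologicalSpace Y₂]

def conjHom (h : Y₁ ≃ₜ Y₂) : (Y₁ ≃ₜ Y₁) →* (Y₂ ≃ₜ Y₂) where
  toFun k := h.symm.trans (k.trans h)
  map_one' := ext h.apply_symm_apply
  map_mul' _ _ := ext fun _ => by simp

theorem map_conjHom_eq_of_surjective (h : Y₁ ≃ₜ Y₂) {H₁ : Subgroup (Y₁ ≃ₜ Y₁)}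
    {H₂ : Subgroup (Y₂ ≃ₜ Y₂)} {θ : H₁ → H₂} (hθs : Function.Surjective θ)
    (hθ : ∀ k, (θ k : Y₂ ≃ₜ Y₂) = h.conjHom k) :
    H₁.map h.conjHom = H₂ := by
  ext k
  constructor
  · rintro ⟨k₁, hk₁, rfl⟩
    exact hθ ⟨k₁, hk₁⟩ ▸ (θ ⟨k₁, hk₁⟩).2
  · intro hk
    obtain ⟨k₁, hk₁⟩ := hθs ⟨k, hk⟩
    exact ⟨k₁, k₁.2, by rw [← hθ, hk₁]⟩

end

variable [MetricSpace Y₁] [CompactSpace Y₁] [MetricSpace Y₂] [CompactSpace Y₂]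

theorem continuous_conjHom (h : Y₁ ≃ₜ Y₂) : Continuous h.conjHom := by
  refine Metric.continuous_iff.mpr fun k₀ ε hε => ?_
  obtain ⟨δ, hδ, hh⟩ := Metric.uniformContinuous_iff.mp
    (CompactSpace.uniformContinuous_of_continuous h.continuous) ε hε
  refine ⟨δ, hδ, fun k hk => (dist_lt_iff' _ _ hε).mpr fun y => hh ?_⟩
  exact (dist_apply_le k k₀ (h.symm y)).trans_lt hk

/-- Conjugating by `h` maps the closure of `H` onto the closure of its image, and the isotropy
group of `y` onto that of `h y`. -/
theorem steinitzRelativeOrder_stabilizer_closure_map_conjHom (h : Y₁ ≃ₜ Y₂)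
    (H : Subgroup (Y₁ ≃ₜ Y₁)) (hH : IsCompact (H.topologicalClosure : Set (Y₁ ≃ₜ Y₁))) (y : Y₁) :
    steinitzRelativeOrder (MulAction.stabilizer (H.map h.conjHom).topologicalClosure (h y)) =
      steinitzRelativeOrder (MulAction.stabilizer H.topologicalClosure y) := by
  have hc := h.continuous_conjHom
  have hcl : H.topologicalClosure.map h.conjHom = (H.map h.conjHom).topologicalClosure := by
    apply SetLike.coe_injective
    simp only [Subgroup.coe_map, Subgroup.topologicalClosure_coe]
    exact subset_antisymm (image_closure_subset_closure_image hc)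
      (closure_minimal (image_mono subset_closure) (hH.image hc).isClosed)
  let ρ : H.topologicalClosure →* (H.map h.conjHom).topologicalClosure :=
    (h.conjHom.comp H.topologicalClosure.subtype).codRestrict _ fun k => hcl ▸ ⟨k, k.2, rfl⟩
  have hρc : Continuous ρ := (hc.comp continuous_subtype_val).subtype_mk _
  have hρs : Function.Surjective ρ := by
    rintro ⟨q, hq⟩
    rw [← hcl] at hq
    obtain ⟨k, hk, rfl⟩ := hq
    exact ⟨⟨k, hk⟩, rfl⟩
  have : CompactSpace H.topologicalClosure := isCompact_iff_compactSpace.mp hH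
  have hstab : MulAction.stabilizer H.topologicalClosure y =
      (MulAction.stabilizer _ (h y)).comap ρ := by
    ext k
    show (k : Y₁ ≃ₜ Y₁) y = y ↔ h ((k : Y₁ ≃ₜ Y₁) (h.symm (h y))) = h y
    simp
  rw [hstab, steinitzRelativeOrder_comap ρ (hρc.isClosedMap.isQuotientMap hρc hρs)]

end Homeomorph

theorem steinitzOrderRel_asympEquiv_of_returnEquivalent_general
    {X₁ : Type*} [MetricSpace X₁] [CompactSpace X₁]
    {Γ₁ : Type*} [Group Γ₁] (Φ₁ : Γ₁ →* (X₁ ≃ₜ X₁))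
    (hmin₁ : IsMinimalAction Φ₁) (heqc₁ : IsEquicontinuousAction Φ₁)
    {X₂ : Type*} [MetricSpace X₂] [CompactSpace X₂]
    {Γ₂ : Type*} [Group Γ₂] (Φ₂ : Γ₂ →* (X₂ ≃ₜ X₂))
    (hmin₂ : IsMinimalAction Φ₂) (heqc₂ : IsEquicontinuousAction Φ₂)
    (hre : ReturnEquivalent Φ₁ Φ₂) (x₁ : X₁) (x₂ : X₂) :
    SteinitzNum.AsympEquiv (steinitzOrderRel Φ₁ x₁) (steinitzOrderRel Φ₂ x₂) := by
  obtain ⟨U₁, U₂, hU₁, hU₂, h, θ, hθ⟩ := hre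
  have : CompactSpace U₁ := isCompact_iff_compactSpace.mp hU₁.2.1.isClosed.isCompact
  have : CompactSpace U₂ := isCompact_iff_compactSpace.mp hU₂.2.1.isClosed.isCompact
  obtain ⟨y, hy⟩ := hU₁.1
  rw [steinitzOrderRel_eq_of_isMinimalAction hmin₁ heqc₁ x₁ y,
    steinitzOrderRel_eq_of_isMinimalAction hmin₂ heqc₂ x₂ (h ⟨y, hy⟩)]
  have hconj := h.steinitzRelativeOrder_stabilizer_closure_map_conjHom _
    (hU₁.isCompact_closure_holonomyGroup heqc₁) ⟨y, hy⟩
  rw [h.map_conjHom_eq_of_surjective θ.surjective hθ] at hconj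
  exact (steinitzOrderRel_asympEquiv_holonomy heqc₁ hU₁ hy).trans
    (hconj ▸ steinitzOrderRel_asympEquiv_holonomy heqc₂ hU₂ (h ⟨y, hy⟩).2).symm

/-- The relative Steinitz order `Π[G(Φ) : D(Φ,x)]` of a minimal
equicontinuous Cantor action is, up to asymptotic equivalence, an invariant of
return equivalence. -/
theorem steinitzOrderRel_asympEquiv_of_returnEquivalent
    {X₁ : Type*} [MetricSpace X₁] [CompactSpace X₁] [Nonempty X₁] [TotallyDisconnectedSpace X₁]
    (hperf₁ : Perfect (Set.univ : Set X₁))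
    {Γ₁ : Type*} [Group Γ₁] [Countable Γ₁] (Φ₁ : Γ₁ →* (X₁ ≃ₜ X₁))
    (hmin₁ : IsMinimalAction Φ₁) (heqc₁ : IsEquicontinuousAction Φ₁)
    {X₂ : Type*} [MetricSpace X₂] [CompactSpace X₂] [Nonempty X₂] [TotallyDisconnectedSpace X₂]
    (hperf₂ : Perfect (Set.univ : Set X₂))
    {Γ₂ : Type*} [Group Γ₂] [Countable Γ₂] (Φ₂ : Γ₂ →* (X₂ ≃ₜ X₂))
    (hmin₂ : IsMinimalAction Φ₂) (heqc₂ : IsEquicontinuousAction Φ₂)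
    (hre : ReturnEquivalent Φ₁ Φ₂) (x₁ : X₁) (x₂ : X₂) :
    SteinitzNum.AsympEquiv (steinitzOrderRel Φ₁ x₁) (steinitzOrderRel Φ₂ x₂) :=
  steinitzOrderRel_asympEquiv_of_returnEquivalent_general Φ₁ hmin₁ heqc₁ Φ₂ hmin₂ heqc₂ hre x₁ x₂
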